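/- Fix n ≥ 1 and set b = ⌊log₂ n⌋ + 2. In ℤ[X₀, …, X_{b−1}], let I′ be the ideal generated by Xᵢ² − (−2·Xᵢ + X_{i+1}) for 0 ≤ i ≤ b−2 together with X_{b−1}². If g is a multilinear polynomial (every exponent in every monomial of its support is at most 1) with (1 + X₀)ⁿ − g ∈ I′, then evaluating g at X₀ = X₁ = ⋯ = X_{b−1} = 1 gives 2^{wt(n)}, the n-th term of Gould's sequence, where wt(n) is the number of ones in the binary expansion of n. -/

import Mathlib

open MvPolynomial

/-- The generators of the ideal `I′`: `Xᵢ² − (−2Xᵢ + X_{i+1})` for `i ≤ b-2`, and `X_{b-1}²`. -/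
noncomputable def gens' (b : ℕ) : Fin b → MvPolynomial (Fin b) ℤ := fun i =>
  if h : (i : ℕ) + 1 < b then X i ^ 2 - (-2 * X i + X ⟨(i : ℕ) + 1, h⟩) else X i ^ 2

/-!
The substitution `Xᵢ ↦ t^{2^i} - 1` into `ℤ[t]` kills `Xᵢ² + 2Xᵢ - X_{i+1}` and sends `X_{b-1}²`
to `(t^{2^{b-1}} - 1)²`, which is monic of degree `2^b`. A multilinear `g` goes to a polynomial
of degree `< 2^b`, so `(1 + X₀)ⁿ - g ∈ I′` and `n < 2^b` force `g ↦ tⁿ`. Now apply the linear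
functional `L(tᵏ) = 2^{wt k}`: expanding `∏_{i ∈ S} (t^{2^i} - 1)` gives
`L = ∑_{T ⊆ S} (-1)^{|S \ T|} 2^{|T|} = (2 - 1)^{|S|} = 1` on each monomial, so `L` of the image
of `g` is `g(1, …, 1)`, while `L(tⁿ) = 2^{wt n}`.
-/

theorem Nat.digits_two_sum_add_two_pow {r a : ℕ} (h : r < 2 ^ a) :
    (Nat.digits 2 (r + 2 ^ a)).sum = (Nat.digits 2 r).sum + 1 := by
  have hlen : (Nat.digits 2 r).length ≤ a := (Nat.digits_length_le_iff one_lt_two r).2 h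
  have := Nat.digits_append_zeroes_append_digits (b := 2) (k := a - (Nat.digits 2 r).length)
    (m := 1) (n := r) one_lt_two one_pos
  rw [Nat.add_sub_cancel' hlen, mul_one] at this
  rw [← this]
  simp

theorem Nat.digits_two_sum_sum_two_pow (T : Finset ℕ) :
    (Nat.digits 2 (∑ i ∈ T, 2 ^ i)).sum = T.card := by
  induction T using Finset.induction_on_max with
  | empty => simp
  | insert a s ha ih =>
    have has : a ∉ s := fun h => (ha a h).false
    rw [Finset.sum_insert has, add_comm, Nat.digits_two_sum_add_two_pow (Nat.geomSum_lt le_rfl ha),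
      ih, Finset.card_insert_of_notMem has]

section
open Polynomial

noncomputable def binaryFactor (i : ℕ) : ℤ[X] := (X : ℤ[X]) ^ 2 ^ i - 1

noncomputable def gouldFunctional : ℤ[X] →ₗ[ℤ] ℤ :=
  lsum fun k => LinearMap.mulRight ℤ (2 ^ (Nat.digits 2 k).sum)

theorem gouldFunctional_monomial (k : ℕ) (c : ℤ) :
    gouldFunctional (monomial k c) = c * 2 ^ (Nat.digits 2 k).sum := by
  simp [gouldFunctional]

theorem gouldFunctional_X_pow (k : ℕ) :
    gouldFunctional ((X : ℤ[X]) ^ k) = 2 ^ (Nat.digits 2 k).sum := by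
  rw [Polynomial.X_pow_eq_monomial, gouldFunctional_monomial, one_mul]

theorem gouldFunctional_prod_mul_X_pow {S T : Finset ℕ} (hST : Disjoint S T) :
    gouldFunctional ((∏ i ∈ S, binaryFactor i) * (X : ℤ[X]) ^ (∑ i ∈ T, 2 ^ i)) = 2 ^ T.card := by
  induction S using Finset.induction_on generalizing T with
  | empty =>
    rw [Finset.prod_empty, one_mul, gouldFunctional_X_pow, Nat.digits_two_sum_sum_two_pow]
  | @insert j S hjS ih =>
    obtain ⟨hjT, hST⟩ := Finset.disjoint_insert_left.1 hST
    have expand : (∏ i ∈ insert j S, binaryFactor i) * (X : ℤ[X]) ^ (∑ i ∈ T, 2 ^ i)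
        = (∏ i ∈ S, binaryFactor i) * (X : ℤ[X]) ^ (∑ i ∈ insert j T, 2 ^ i)
          - (∏ i ∈ S, binaryFactor i) * (X : ℤ[X]) ^ (∑ i ∈ T, 2 ^ i) := by
      rw [Finset.prod_insert hjS, Finset.sum_insert hjT, pow_add, binaryFactor]
      ring
    rw [expand, map_sub, ih (Finset.disjoint_insert_right.2 ⟨hjS, hST⟩), ih hST,
      Finset.card_insert_of_notMem hjT]
    ring

theorem gouldFunctional_prod_binaryFactor (S : Finset ℕ) :
    gouldFunctional (∏ i ∈ S, binaryFactor i) = 1 := by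
  simpa using gouldFunctional_prod_mul_X_pow (Finset.disjoint_empty_right S)

theorem binaryFactor_sq_add (i : ℕ) :
    binaryFactor i ^ 2 + 2 * binaryFactor i = binaryFactor (i + 1) := by
  simp only [binaryFactor, pow_succ, pow_mul]
  ring

theorem monic_binaryFactor (i : ℕ) : (binaryFactor i).Monic := by
  simpa [binaryFactor] using monic_X_pow_sub_C (1 : ℤ) (Nat.two_pow_pos i).ne'

theorem natDegree_binaryFactor (i : ℕ) : (binaryFactor i).natDegree = 2 ^ i := by
  simpa [binaryFactor] using natDegree_X_pow_sub_C (n := 2 ^ i) (r := (1 : ℤ))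

theorem natDegree_prod_binaryFactor (S : Finset ℕ) :
    (∏ i ∈ S, binaryFactor i).natDegree = ∑ i ∈ S, 2 ^ i := by
  rw [natDegree_prod_of_monic _ _ fun i _ => monic_binaryFactor i]
  simp only [natDegree_binaryFactor]

end

noncomputable def binarySubst (b : ℕ) : MvPolynomial (Fin b) ℤ →ₐ[ℤ] Polynomial ℤ :=
  aeval fun i => binaryFactor i

section
variable {b : ℕ}

theorem binarySubst_monomial {m : Fin b →₀ ℕ} (hm : ∀ i, m i ≤ 1) (c : ℤ) :
    binarySubst b (monomial m c) =
      Polynomial.C c * ∏ i ∈ m.support.map Fin.valEmbedding, binaryFactor i := by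
  rw [binarySubst, aeval_monomial, Finset.prod_map, Finsupp.prod]
  congr 1
  refine Finset.prod_congr rfl fun i hi => ?_
  rw [le_antisymm (hm i) (Nat.one_le_iff_ne_zero.2 (Finsupp.mem_support_iff.1 hi)), pow_one]
  rfl

theorem natDegree_binarySubst_lt {g : MvPolynomial (Fin b) ℤ}
    (hml : ∀ m ∈ g.support, ∀ i, m i ≤ 1) : (binarySubst b g).natDegree < 2 ^ b := by
  suffices (binarySubst b g).natDegree ≤ 2 ^ b - 1 by have := b.one_le_two_pow; omega
  conv_lhs => rw [← support_sum_monomial_coeff g, map_sum]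
  refine Polynomial.natDegree_sum_le_of_forall_le _ _ fun m hm => ?_
  rw [binarySubst_monomial (hml m hm)]
  refine Polynomial.natDegree_C_mul_le _ _ |>.trans ?_
  rw [natDegree_prod_binaryFactor]
  refine Nat.le_sub_one_of_lt (Nat.geomSum_lt le_rfl fun i hi => ?_)
  obtain ⟨i, -, rfl⟩ := Finset.mem_map.1 hi
  exact i.isLt

theorem gouldFunctional_binarySubst {g : MvPolynomial (Fin b) ℤ}
    (hml : ∀ m ∈ g.support, ∀ i, m i ≤ 1) :
    gouldFunctional (binarySubst b g) = eval (fun _ => 1) g := by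
  conv_lhs => rw [← support_sum_monomial_coeff g]
  simp only [map_sum, eval_eq, one_pow, Finset.prod_const_one, mul_one]
  refine Finset.sum_congr rfl fun m hm => ?_
  rw [binarySubst_monomial (hml m hm), ← Polynomial.smul_eq_C_mul, map_zsmul,
    gouldFunctional_prod_binaryFactor, smul_eq_mul, mul_one]

theorem span_gens'_le_comap_binarySubst :
    Ideal.span (Set.range (gens' b)) ≤
      (Ideal.span {binaryFactor (b - 1) ^ 2}).comap (binarySubst b) := by
  refine Ideal.span_le.2 ?_
  rintro _ ⟨i, rfl⟩
  rw [SetLike.mem_coe, Ideal.mem_comap, gens']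
  split_ifs with h
  · have hsucc := binaryFactor_sq_add i
    simp only [map_sub, map_add, map_mul, map_pow, map_neg, map_ofNat, binarySubst, aeval_X]
    convert Ideal.zero_mem _ using 1
    rw [← hsucc]
    ring
  · rw [map_pow, binarySubst, aeval_X, show (i : ℕ) = b - 1 by omega]
    exact Ideal.mem_span_singleton_self _

theorem binarySubst_eq_X_pow {n : ℕ} (hn : n < 2 ^ b) (hb : 0 < b) {g : MvPolynomial (Fin b) ℤ}
    (hml : ∀ m ∈ g.support, ∀ i, m i ≤ 1)
    (hg : (1 + X ⟨0, hb⟩) ^ n - g ∈ Ideal.span (Set.range (gens' b))) :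
    binarySubst b g = Polynomial.X ^ n := by
  have hdvd : binaryFactor (b - 1) ^ 2 ∣ Polynomial.X ^ n - binarySubst b g := by
    have := span_gens'_le_comap_binarySubst hg
    rw [Ideal.mem_comap, Ideal.mem_span_singleton] at this
    simpa [binarySubst, binaryFactor] using this
  have hdeg : (binaryFactor (b - 1) ^ 2).natDegree = 2 ^ b := by
    rw [Polynomial.natDegree_pow, natDegree_binaryFactor, ← pow_succ', Nat.sub_add_cancel hb]
  refine (sub_eq_zero.1 (Polynomial.eq_zero_of_dvd_of_natDegree_lt hdvd ?_)).symm
  rw [hdeg]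
  refine (Polynomial.natDegree_sub_le _ _).trans_lt (max_lt ?_ (natDegree_binarySubst_lt hml))
  rwa [Polynomial.natDegree_X_pow]

end

theorem stmt6 (n : ℕ) (b : ℕ) (hb : b = Nat.log 2 n + 2)
    (g : MvPolynomial (Fin b) ℤ)
    (hml : ∀ m ∈ g.support, ∀ i : Fin b, m i ≤ 1)
    (hg : (1 + X (⟨0, by omega⟩ : Fin b)) ^ n - g ∈ Ideal.span (Set.range (gens' b))) :
    eval (fun _ : Fin b => (1 : ℤ)) g = 2 ^ (Nat.digits 2 n).sum := by
  have hn : n < 2 ^ b := hb ▸ (Nat.lt_pow_succ_log_self one_lt_two n).trans_le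
    (Nat.pow_le_pow_right two_pos (Nat.le_succ _))
  rw [← gouldFunctional_binarySubst hml, binarySubst_eq_X_pow hn (by omega) hml hg,
    gouldFunctional_X_pow]
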